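/- Every configuration C all of whose sets are nonempty belongs to the combination-closure of the set of singleton configurations dominated by C; that is, C can be built by iteratively combining singleton configurations that it dominates. (Configuration construction.) -/

import Mathlib

namespace RoundElim

/-- The configuration (multiset of cardinality `δ`) associated to a function `Fin δ → α`. -/
def ofFn {α : Type*} {δ : ℕ} (f : Fin δ → α) : Multiset α :=
  (List.ofFn f : List α)

variable {σ : Type*} [DecidableEq σ]

/-- `DominatedBy A B` means: configuration `B` dominates configuration `A`. -/
def DominatedBy (A B : Multiset (Finset σ)) : Prop :=
  Multiset.Rel (· ⊆ ·) A B

/-- `StrictlyDominatedBy A B` means: configuration `B` strictly dominates configuration `A`. -/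
def StrictlyDominatedBy (A B : Multiset (Finset σ)) : Prop :=
  DominatedBy A B ∧ ¬ DominatedBy B A

/-- The combination of the representatives `a`, `b` with respect to the permutation `φ`
and the index `u`: union at position `u`, intersection everywhere else. -/
def combineFn {δ : ℕ} (a b : Fin δ → Finset σ) (φ : Equiv.Perm (Fin δ)) (u : Fin δ) :
    Fin δ → Finset σ :=
  fun i => if i = u then a i ∪ b (φ i) else a i ∩ b (φ i)

/-- `C` is a combination of the configurations `A` and `B`. -/
def IsCombination (δ : ℕ) (C A B : Multiset (Finset σ)) : Prop :=
  ∃ (a b : Fin δ → Finset σ) (φ : Equiv.Perm (Fin δ)) (u : Fin δ),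
    ofFn a = A ∧ ofFn b = B ∧ ofFn (combineFn a b φ u) = C

/-- `C` satisfies the universal quantifier w.r.t. the edge constraint `E`. -/
def SatUQ (E : Set (Multiset σ)) (C : Multiset (Finset σ)) : Prop :=
  ∀ M : Multiset σ, Multiset.Rel (· ∈ ·) M C → M ∈ E

/-- A singleton configuration: all its sets have exactly one element. -/
def IsSingletonConfig (C : Multiset (Finset σ)) : Prop :=
  ∀ s ∈ C, s.card = 1

/-- The combination-closure of a set `Γ` of configurations: the smallest set containing `Γ`
and containing every combination of two of its members. -/
inductive CombClosure (δ : ℕ) (Γ : Set (Multiset (Finset σ))) :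
    Multiset (Finset σ) → Prop
  | base {C : Multiset (Finset σ)} : C ∈ Γ → CombClosure δ Γ C
  | comb {A B C : Multiset (Finset σ)} : CombClosure δ Γ A → CombClosure δ Γ B →
      IsCombination δ C A B → CombClosure δ Γ C



lemma exists_rep {α : Type*} {δ : ℕ} (D : Multiset α) (h : Multiset.card D = δ) :
    ∃ d : Fin δ → α, ofFn d = D := by
  obtain ⟨l, rfl⟩ : ∃ l : List α, (l : Multiset α) = D := ⟨D.toList, by simp⟩
  have h' : l.length = δ := by simpa using h
  subst h'
  exact ⟨l.get, by simp [ofFn, List.ofFn_get]⟩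

lemma forall₂_rel {α β : Type*} {r : α → β → Prop} {l₁ : List α} {l₂ : List β}
    (h : List.Forall₂ r l₁ l₂) : Multiset.Rel r ↑l₁ ↑l₂ := by
  induction h with
  | nil => simp
  | cons hr _ ih => simpa using Multiset.Rel.cons hr ih

lemma rel_ofFn {α β : Type*} {δ : ℕ} {r : α → β → Prop} {f : Fin δ → α} {g : Fin δ → β}
    (h : ∀ i, r (f i) (g i)) : Multiset.Rel r (ofFn f) (ofFn g) := by
  apply forall₂_rel
  rw [List.forall₂_iff_get]
  refine ⟨by simp, fun i h1 h2 => ?_⟩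
  simpa using h ⟨i, by simpa using h1⟩

lemma mem_ofFn' {α : Type*} {δ : ℕ} {f : Fin δ → α} {x : α} :
    x ∈ ofFn f ↔ ∃ i, f i = x := by simp [ofFn, List.mem_ofFn, Set.range]

lemma main_lemma {σ : Type*} [DecidableEq σ] (δ : ℕ)
    (C : Multiset (Finset σ)) :
    ∀ n (d : Fin δ → Finset σ), (∑ i, (d i).card) = n →
      (∀ i, (d i).Nonempty) → DominatedBy (ofFn d) C →
    CombClosure δ
      {A : Multiset (Finset σ) | Multiset.card A = δ ∧ IsSingletonConfig A ∧ DominatedBy A C}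
      (ofFn d) := by
  intro n
  induction n using Nat.strong_induction_on with
  | _ n IH =>
    intro d hn hne hdom
    by_cases hsing : ∀ i, (d i).card = 1
    · refine CombClosure.base ⟨by simp [ofFn], ?_, hdom⟩
      intro s hs
      obtain ⟨i, rfl⟩ := mem_ofFn'.mp hs
      exact hsing i
    · push_neg at hsing
      obtain ⟨u, hu⟩ := hsing
      have hcard2 : 2 ≤ (d u).card := by
        have := Finset.card_pos.mpr (hne u); omega
      obtain ⟨x, hx⟩ := hne u
      set a : Fin δ → Finset σ := Function.update d u ((d u).erase x) with ha
      set b : Fin δ → Finset σ := Function.update d u {x} with hb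
      have hau : a u = (d u).erase x := by simp [ha]
      have hbu : b u = {x} := by simp [hb]
      have hai : ∀ i, i ≠ u → a i = d i := fun i hi => Function.update_of_ne hi _ _
      have hbi : ∀ i, i ≠ u → b i = d i := fun i hi => Function.update_of_ne hi _ _
      have hsub_a : ∀ i, a i ⊆ d i := by
        intro i; by_cases h : i = u
        · subst h; rw [hau]; exact Finset.erase_subset _ _
        · rw [hai i h]
      have hsub_b : ∀ i, b i ⊆ d i := by
        intro i; by_cases h : i = u
        · subst h; rw [hbu]; simpa using hx
        · rw [hbi i h]
      have hdom_a : DominatedBy (ofFn a) C :=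
        Multiset.Rel.trans _ (rel_ofFn hsub_a) hdom
      have hdom_b : DominatedBy (ofFn b) C :=
        Multiset.Rel.trans _ (rel_ofFn hsub_b) hdom
      have hsum_a : ∑ i, (a i).card < n := by
        rw [← hn]
        apply Finset.sum_lt_sum (fun i _ => Finset.card_le_card (hsub_a i))
        exact ⟨u, Finset.mem_univ u, by
          rw [hau, Finset.card_erase_of_mem hx]; omega⟩
      have hsum_b : ∑ i, (b i).card < n := by
        rw [← hn]
        apply Finset.sum_lt_sum (fun i _ => Finset.card_le_card (hsub_b i))
        exact ⟨u, Finset.mem_univ u, by rw [hbu]; simp; omega⟩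
      have hne_a : ∀ i, (a i).Nonempty := by
        intro i; by_cases h : i = u
        · subst h; rw [hau, ← Finset.card_pos, Finset.card_erase_of_mem hx]; omega
        · rw [hai i h]; exact hne i
      have hne_b : ∀ i, (b i).Nonempty := by
        intro i; by_cases h : i = u
        · subst h; rw [hbu]; simp
        · rw [hbi i h]; exact hne i
      have hcomb : ofFn (combineFn a b (Equiv.refl _) u) = ofFn d := by
        congr 1
        funext i
        by_cases h : i = u
        · subst h
          simp only [combineFn, if_pos rfl, Equiv.refl_apply, hau, hbu]
          rw [Finset.union_comm, ← Finset.insert_eq, Finset.insert_erase hx]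
          simp
        · simp [combineFn, h, hai i h, hbi i h]
      exact CombClosure.comb (IH _ hsum_a a rfl hne_a hdom_a)
        (IH _ hsum_b b rfl hne_b hdom_b)
        ⟨a, b, Equiv.refl _, u, rfl, rfl, hcomb⟩

/-- Configuration construction: every configuration all of whose sets are nonempty can be
built by iteratively combining singleton configurations that it dominates. -/
theorem configuration_construction {σ : Type*} [Fintype σ] [DecidableEq σ] (δ : ℕ) (hδ : 0 < δ)
    (C : Multiset (Finset σ)) (hCcard : Multiset.card C = δ)
    (hCne : ∀ s ∈ C, s.Nonempty) :
    CombClosure δ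
      {A : Multiset (Finset σ) | Multiset.card A = δ ∧ IsSingletonConfig A ∧ DominatedBy A C}
      C := by
  obtain ⟨c, rfl⟩ := exists_rep C hCcard
  exact main_lemma δ _ _ c rfl
    (fun i => hCne _ (mem_ofFn'.mpr ⟨i, rfl⟩))
    (Multiset.rel_refl_of_refl_on fun s _ => Finset.Subset.refl s)

end RoundElim
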